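/- arXiv:1008.1970 — 5 statements merged into one kernel-verified Lean document; each statement's English description precedes it below -/
import Mathlib

section
/- Variational characterization of Rényi entropy: for any PMF P on a finite set X and any θ > 0, sup over PMFs Q of { θ H(Q) − D(Q‖P) } = θ H_{1/(1+θ)}(P), where H_α(P) = (1/(1−α)) ln ∑_x P(x)^α is the Rényi entropy of order α and H is Shannon entropy. -/
/-!
With `α = 1/(1+θ)` the objective equals `(1+θ) ∑ Q (log P^α - log Q)`, so the claim is Gibbs'
variational principle `max_Q ∑ Q (log a - log Q) = log ∑ a` for the weights `a = P^α`,
the maximum being attained at `Q = a / ∑ a`; and `θ (1 - α)⁻¹ = 1 + θ`.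
-/

open Real Finset

lemma Real.mul_log_sub_mul_log_le_sub {q t : ℝ} (hq : 0 ≤ q) (ht : 0 < t) :
    q * log t - q * log q ≤ t - q := by
  rcases hq.eq_or_lt with rfl | hq
  · simpa using ht.le
  calc q * log t - q * log q = q * log (t / q) := by rw [log_div ht.ne' hq.ne']; ring
    _ ≤ q * (t / q - 1) := by gcongr; exact log_le_sub_one_of_pos (div_pos ht hq)
    _ = t - q := by field_simp

section Gibbs

variable {X : Type*} [Fintype X]

theorem Real.sum_mul_log_sub_mul_log_le_log_sum {a Q : X → ℝ} (ha : ∀ x, 0 < a x)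
    (hQ0 : ∀ x, 0 ≤ Q x) (hQ1 : ∑ x, Q x = 1) :
    ∑ x, (Q x * log (a x) - Q x * log (Q x)) ≤ log (∑ x, a x) := by
  have : Nonempty X := by
    by_contra h
    simp [not_nonempty_iff.mp h] at hQ1
  set S := ∑ x, a x
  have hS : 0 < S := sum_pos (fun x _ => ha x) univ_nonempty
  have hterm : ∀ x, Q x * log (a x) - Q x * log (Q x)
      = (Q x * log (a x / S) - Q x * log (Q x)) + Q x * log S := fun x => by
    rw [log_div (ha x).ne' hS.ne']; ring
  calc ∑ x, (Q x * log (a x) - Q x * log (Q x))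
      = ∑ x, (Q x * log (a x / S) - Q x * log (Q x)) + log S := by
        rw [sum_congr rfl fun x _ => hterm x, sum_add_distrib, ← sum_mul, hQ1, one_mul]
    _ ≤ ∑ x, (a x / S - Q x) + log S :=
        add_le_add_left
          (sum_le_sum fun x _ => mul_log_sub_mul_log_le_sub (hQ0 x) (div_pos (ha x) hS)) _
    _ = log S := by rw [sum_sub_distrib, ← sum_div, div_self hS.ne', hQ1]; ring

theorem Real.sum_mul_log_sub_mul_log_eq_log_sum {a Q : X → ℝ} [Nonempty X]
    (ha : ∀ x, 0 < a x) (hQ : ∀ x, Q x = a x / ∑ y, a y) :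
    ∑ x, (Q x * log (a x) - Q x * log (Q x)) = log (∑ x, a x) := by
  set S := ∑ x, a x
  have hS : 0 < S := sum_pos (fun x _ => ha x) univ_nonempty
  calc ∑ x, (Q x * log (a x) - Q x * log (Q x)) = ∑ x, a x / S * log S := by
        refine sum_congr rfl fun x _ => ?_
        rw [hQ, log_div (ha x).ne' hS.ne']; ring
    _ = log S := by rw [← sum_mul, ← sum_div, div_self hS.ne', one_mul]

end Gibbs

lemma Real.mul_neg_mul_log_sub_mul_log_div_eq {θ p : ℝ} (hθ : 1 + θ ≠ 0) (hp : 0 < p) (q : ℝ) :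
    θ * -(q * log q) - q * log (q / p)
      = (1 + θ) * (q * log (p ^ (1 / (1 + θ))) - q * log q) := by
  rcases eq_or_ne q 0 with rfl | hq
  · simp
  rw [log_div hq hp.ne', log_rpow hp]
  field_simp
  ring

theorem stmt5_general {X : Type*} [Fintype X] [Nonempty X]
    (P : X → ℝ) (hP0 : ∀ x, 0 < P x)
    (θ : ℝ) (hθ : 0 < θ) :
    sSup {v : ℝ | ∃ Q : X → ℝ, (∀ x, 0 ≤ Q x) ∧ (∑ x : X, Q x = 1) ∧
        v = θ * (∑ x : X, -(Q x * Real.log (Q x)))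
            - ∑ x : X, Q x * Real.log (Q x / P x)} =
      θ * ((1 - 1 / (1 + θ))⁻¹ *
        Real.log (∑ x : X, P x ^ (1 / (1 + θ)))) := by
  have hθ1 : 0 < 1 + θ := by linarith
  set a : X → ℝ := fun x => P x ^ (1 / (1 + θ))
  have ha : ∀ x, 0 < a x := fun x => rpow_pos_of_pos (hP0 x) _
  have hobjective : ∀ Q : X → ℝ, θ * (∑ x, -(Q x * log (Q x))) - ∑ x, Q x * log (Q x / P x)
      = (1 + θ) * ∑ x, (Q x * log (a x) - Q x * log (Q x)) := fun Q => by
    rw [mul_sum, mul_sum, ← sum_sub_distrib]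
    exact sum_congr rfl fun x _ => mul_neg_mul_log_sub_mul_log_div_eq hθ1.ne' (hP0 x) (Q x)
  have hrenyi : θ * (1 - 1 / (1 + θ))⁻¹ = 1 + θ := by
    rw [one_sub_div hθ1.ne', add_sub_cancel_left, inv_div, mul_div_cancel₀ _ hθ.ne']
  rw [← mul_assoc, hrenyi]
  set S := ∑ x, a x
  have hS : 0 < S := sum_pos (fun x _ => ha x) univ_nonempty
  refine IsGreatest.csSup_eq ⟨⟨fun x => a x / S, fun x => (div_pos (ha x) hS).le, ?_, ?_⟩, ?_⟩
  · rw [← sum_div, div_self hS.ne']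
  · rw [hobjective, sum_mul_log_sub_mul_log_eq_log_sum ha fun x => rfl]
  · rintro v ⟨Q, hQ0, hQ1, rfl⟩
    rw [hobjective]
    exact mul_le_mul_of_nonneg_left (sum_mul_log_sub_mul_log_le_log_sum ha hQ0 hQ1) hθ1.le

/-- Variational characterization of Rényi entropy: for any full-support PMF `P`
on a finite set `X` and any `θ > 0`,
`sup_Q { θ H(Q) − D(Q‖P) } = θ H_{1/(1+θ)}(P)`, where
`H_α(P) = (1/(1−α)) ln ∑_x P(x)^α` and `H` is Shannon entropy (natural log). -/
theorem stmt5 {X : Type*} [Fintype X] [Nonempty X]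
    (P : X → ℝ) (hP0 : ∀ x, 0 < P x) (hP1 : ∑ x : X, P x = 1)
    (θ : ℝ) (hθ : 0 < θ) :
    sSup {v : ℝ | ∃ Q : X → ℝ, (∀ x, 0 ≤ Q x) ∧ (∑ x : X, Q x = 1) ∧
        v = θ * (∑ x : X, -(Q x * Real.log (Q x)))
            - ∑ x : X, Q x * Real.log (Q x / P x)} =
      θ * ((1 - 1 / (1 + θ))⁻¹ *
        Real.log (∑ x : X, P x ^ (1 / (1 + θ)))) :=
  stmt5_general P hP0 θ hθ
end

section
/- For any ρ > 0, any PMF μ on a finite set X, and any nonempty subset B ⊆ X with μ(B) > 0, (1+ρ) ln ∑_{x∈B} μ(x)^{1/(1+ρ)} = max over PMFs ν supported on B of { ρ H(ν) − D(ν‖μ) }, and the maximum is attained by ν*(x) = μ(x)^{1/(1+ρ)} / ∑_{y∈B} μ(y)^{1/(1+ρ)} for x ∈ B. -/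
/-!
With `α = 1 / (1 + ρ)`, let `ν*` be the escort distribution `μ ^ α / Z` on `B`, where
`Z = ∑_{y ∈ B} μ y ^ α`. Since `ν log μ = (1 + ρ) ν log (μ ^ α)`, the objective rewrites
termwise as `ρ H(ν) - D(ν‖μ) = (1 + ρ) (log Z - D(ν‖ν*))` for every `ν ∈ M(B)`
with `ν ≪ μ`. Gibbs' inequality `D(ν‖ν*) ≥ 0`, with equality at `ν = ν*`, finishes the proof.
-/

open Real Finset

theorem sub_le_mul_log_div {p q : ℝ} (hp : 0 ≤ p) (hq : 0 ≤ q) (hpq : q = 0 → p = 0) :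
    p - q ≤ p * log (p / q) := by
  rcases hp.eq_or_lt with rfl | hp
  · simpa using hq
  have hq : 0 < q := hq.lt_of_ne fun h => hp.ne' (hpq h.symm)
  calc p - q = p * (1 - (p / q)⁻¹) := by field_simp
    _ ≤ p * log (p / q) := by gcongr; exact one_sub_inv_le_log_of_pos (by positivity)

theorem sum_mul_log_div_nonneg {ι : Type*} {s : Finset ι} {p q : ι → ℝ}
    (hp : ∀ i ∈ s, 0 ≤ p i) (hq : ∀ i ∈ s, 0 ≤ q i) (hpq : ∀ i ∈ s, q i = 0 → p i = 0)
    (hsum : ∑ i ∈ s, q i ≤ ∑ i ∈ s, p i) :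
    0 ≤ ∑ i ∈ s, p i * log (p i / q i) :=
  calc 0 ≤ ∑ i ∈ s, (p i - q i) := by rw [sum_sub_distrib]; linarith
    _ ≤ _ := sum_le_sum fun i hi => sub_le_mul_log_div (hp i hi) (hq i hi) (hpq i hi)

theorem sum_mul_log_div_self {ι : Type*} (s : Finset ι) (p : ι → ℝ) :
    ∑ i ∈ s, p i * log (p i / p i) = 0 :=
  sum_eq_zero fun i _ => by rcases eq_or_ne (p i) 0 with h | h <;> simp [h]

theorem sum_rpow_pos {X : Type*} {μ : X → ℝ} {B : Finset X} (α : ℝ) (hμ : ∀ x, 0 ≤ μ x)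
    (hB : 0 < ∑ x ∈ B, μ x) :
    0 < ∑ y ∈ B, μ y ^ α := by
  obtain ⟨x, hxB, hx⟩ := exists_lt_of_sum_lt (f := fun _ => (0 : ℝ)) (by simpa using hB)
  exact sum_pos' (fun y _ => rpow_nonneg (hμ y) α) ⟨x, hxB, rpow_pos_of_pos hx α⟩

section Escort

variable {X : Type*} [DecidableEq X] (μ : X → ℝ) (B : Finset X) (α : ℝ)

noncomputable def escort (x : X) : ℝ :=
  if x ∈ B then μ x ^ α / ∑ y ∈ B, μ y ^ α else 0

variable {μ B α}

theorem escort_of_mem {x : X} (hx : x ∈ B) : escort μ B α x = μ x ^ α / ∑ y ∈ B, μ y ^ α :=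
  if_pos hx

theorem escort_of_not_mem {x : X} (hx : x ∉ B) : escort μ B α x = 0 :=
  if_neg hx

theorem escort_eq_zero (hα : α ≠ 0) {x : X} (hx : μ x = 0) : escort μ B α x = 0 := by
  unfold escort
  split_ifs <;> simp [hx, zero_rpow hα]

theorem escort_nonneg (hμ : ∀ x, 0 ≤ μ x) (x : X) : 0 ≤ escort μ B α x := by
  unfold escort
  split_ifs
  · exact div_nonneg (rpow_nonneg (hμ x) α) (sum_nonneg fun y _ => rpow_nonneg (hμ y) α)
  · exact le_rfl

theorem sum_escort (hZ : ∑ y ∈ B, μ y ^ α ≠ 0) : ∑ x ∈ B, escort μ B α x = 1 := by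
  rw [sum_congr rfl fun x hx => escort_of_mem hx, ← sum_div, div_self hZ]

theorem escort_eq_zero_iff (hμ : ∀ x, 0 ≤ μ x) (hα : α ≠ 0) (hZ : ∑ y ∈ B, μ y ^ α ≠ 0)
    {x : X} (hx : x ∈ B) : escort μ B α x = 0 ↔ μ x = 0 := by
  rw [escort_of_mem hx, div_eq_zero_iff, rpow_eq_zero (hμ x) hα, or_iff_left hZ]

end Escort

section Objective

/-- The identity `t log m = (1 + ρ) t log (m ^ α)`, rearranged. -/
theorem neg_mul_log_sub_mul_log_div {ρ α t m Z : ℝ} (hα : (1 + ρ) * α = 1)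
    (ht : 0 < t) (hm : 0 < m) (hZ : 0 < Z) :
    ρ * -(t * log t) - t * log (t / m) = (1 + ρ) * (t * log Z - t * log (t / (m ^ α / Z))) := by
  rw [log_div ht.ne' hm.ne', log_div ht.ne' (by positivity), log_div (by positivity) hZ.ne',
    log_rpow hm]
  linear_combination (-(t * log m)) * hα

variable {X : Type*} [Fintype X] [DecidableEq X] {ρ α : ℝ} {μ ν : X → ℝ} {B : Finset X}

theorem objective_eq_mul_log_sub_kl (hα : (1 + ρ) * α = 1) (hμ : ∀ x, 0 ≤ μ x)
    (hZ : 0 < ∑ y ∈ B, μ y ^ α) (hν : ∀ x, 0 ≤ ν x) (hνB : ∀ x, x ∉ B → ν x = 0)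
    (hνμ : ∀ x, μ x = 0 → ν x = 0) :
    ρ * (∑ x, -(ν x * log (ν x))) - ∑ x, ν x * log (ν x / μ x) =
      (1 + ρ) * ((∑ x, ν x) * log (∑ y ∈ B, μ y ^ α)
        - ∑ x, ν x * log (ν x / escort μ B α x)) := by
  rw [mul_sum, ← sum_sub_distrib, sum_mul, ← sum_sub_distrib, mul_sum]
  refine sum_congr rfl fun x _ => ?_
  rcases (hν x).eq_or_lt with h | hpos
  · simp [← h]
  have hxB : x ∈ B := by_contra fun hx => hpos.ne' (hνB x hx)
  have hμx : 0 < μ x := (hμ x).lt_of_ne fun h => hpos.ne' (hνμ x h.symm)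
  rw [escort_of_mem hxB]
  exact neg_mul_log_sub_mul_log_div hα hpos hμx hZ

theorem objective_le_mul_log (hρ : 0 ≤ 1 + ρ) (hα : (1 + ρ) * α = 1) (hμ : ∀ x, 0 ≤ μ x)
    (hZ : 0 < ∑ y ∈ B, μ y ^ α) (hν : ∀ x, 0 ≤ ν x) (hν1 : ∑ x ∈ B, ν x = 1)
    (hνB : ∀ x, x ∉ B → ν x = 0) (hνμ : ∀ x, μ x = 0 → ν x = 0) :
    ρ * (∑ x, -(ν x * log (ν x))) - ∑ x, ν x * log (ν x / μ x) ≤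
      (1 + ρ) * log (∑ y ∈ B, μ y ^ α) := by
  have hν1' : ∑ x, ν x = 1 := by rw [← sum_subset (subset_univ B) fun x _ hx => hνB x hx, hν1]
  have hgibbs : 0 ≤ ∑ x, ν x * log (ν x / escort μ B α x) := by
    refine sum_mul_log_div_nonneg (fun x _ => hν x) (fun x _ => escort_nonneg hμ x) ?_ ?_
    · intro x _ hx
      by_cases hxB : x ∈ B
      · exact hνμ x ((escort_eq_zero_iff hμ (right_ne_zero_of_mul_eq_one hα) hZ.ne' hxB).1 hx)
      · exact hνB x hxB
    · rw [hν1', ← sum_subset (subset_univ B) fun x _ hx => escort_of_not_mem hx,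
        sum_escort hZ.ne']
  rw [objective_eq_mul_log_sub_kl hα hμ hZ hν hνB hνμ, hν1', one_mul]
  exact mul_le_mul_of_nonneg_left (by linarith) hρ

theorem objective_escort (hα : (1 + ρ) * α = 1) (hμ : ∀ x, 0 ≤ μ x)
    (hZ : 0 < ∑ y ∈ B, μ y ^ α) :
    ρ * (∑ x, -(escort μ B α x * log (escort μ B α x)))
      - ∑ x, escort μ B α x * log (escort μ B α x / μ x) =
      (1 + ρ) * log (∑ y ∈ B, μ y ^ α) := by
  rw [objective_eq_mul_log_sub_kl hα hμ hZ (escort_nonneg hμ) (fun x => escort_of_not_mem)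
    (fun x => escort_eq_zero (right_ne_zero_of_mul_eq_one hα)), sum_mul_log_div_self,
    ← sum_subset (subset_univ B) fun x _ hx => escort_of_not_mem hx, sum_escort hZ.ne']
  ring

end Objective

theorem stmt6_general {X : Type*} [Fintype X] [DecidableEq X] (ρ : ℝ) (hρ : 0 < ρ)
    (μ : X → ℝ) (hμ0 : ∀ x, 0 ≤ μ x)
    (B : Finset X) (hμB : 0 < ∑ x ∈ B, μ x)
    (ν' : X → ℝ)
    (hν' : ∀ x, ν' x = if x ∈ B then
        μ x ^ (1 / (1 + ρ)) / ∑ y ∈ B, μ y ^ (1 / (1 + ρ)) else 0) :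
    IsGreatest
      {v : ℝ | ∃ ν : X → ℝ, (∀ x, 0 ≤ ν x) ∧ (∑ x ∈ B, ν x = 1) ∧
        (∀ x, x ∉ B → ν x = 0) ∧ (∀ x, μ x = 0 → ν x = 0) ∧
        v = ρ * (∑ x : X, -(ν x * Real.log (ν x)))
            - ∑ x : X, ν x * Real.log (ν x / μ x)}
      ((1 + ρ) * Real.log (∑ x ∈ B, μ x ^ (1 / (1 + ρ)))) ∧
    ρ * (∑ x : X, -(ν' x * Real.log (ν' x)))
        - (∑ x : X, ν' x * Real.log (ν' x / μ x)) =
      (1 + ρ) * Real.log (∑ x ∈ B, μ x ^ (1 / (1 + ρ))) := by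
  have hα : (1 + ρ) * (1 / (1 + ρ)) = 1 := mul_one_div_cancel (by positivity)
  have hZ := sum_rpow_pos (1 / (1 + ρ)) hμ0 hμB
  obtain rfl : ν' = escort μ B (1 / (1 + ρ)) := funext hν'
  refine ⟨⟨⟨_, escort_nonneg hμ0, sum_escort hZ.ne', fun x => escort_of_not_mem,
    fun x => escort_eq_zero (right_ne_zero_of_mul_eq_one hα), (objective_escort hα hμ0 hZ).symm⟩,
    ?_⟩, objective_escort hα hμ0 hZ⟩
  rintro v ⟨ν, hν, hν1, hνB, hνμ, rfl⟩
  exact objective_le_mul_log (by positivity) hα hμ0 hZ hν hν1 hνB hνμ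

/-- For any `ρ > 0`, any PMF `μ` on a finite set `X`, and any nonempty subset
`B ⊆ X` with `μ(B) > 0`,
`(1+ρ) ln ∑_{x∈B} μ(x)^{1/(1+ρ)} = max_{ν ∈ M(B)} { ρ H(ν) − D(ν‖μ) }`
(the max over PMFs `ν` supported on `B` and absolutely continuous w.r.t. `μ`;
non-absolutely-continuous `ν` have `D(ν‖μ) = +∞` and do not contribute), and
the maximum is attained by
`ν*(x) = μ(x)^{1/(1+ρ)} / ∑_{y∈B} μ(y)^{1/(1+ρ)}` for `x ∈ B`. -/
theorem stmt6 {X : Type*} [Fintype X] [DecidableEq X] (ρ : ℝ) (hρ : 0 < ρ)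
    (μ : X → ℝ) (hμ0 : ∀ x, 0 ≤ μ x) (hμ1 : ∑ x : X, μ x = 1)
    (B : Finset X) (hB : B.Nonempty) (hμB : 0 < ∑ x ∈ B, μ x)
    (ν' : X → ℝ)
    (hν' : ∀ x, ν' x = if x ∈ B then
        μ x ^ (1 / (1 + ρ)) / ∑ y ∈ B, μ y ^ (1 / (1 + ρ)) else 0) :
    IsGreatest
      {v : ℝ | ∃ ν : X → ℝ, (∀ x, 0 ≤ ν x) ∧ (∑ x ∈ B, ν x = 1) ∧
        (∀ x, x ∉ B → ν x = 0) ∧ (∀ x, μ x = 0 → ν x = 0) ∧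
        v = ρ * (∑ x : X, -(ν x * Real.log (ν x)))
            - ∑ x : X, ν x * Real.log (ν x / μ x)}
      ((1 + ρ) * Real.log (∑ x ∈ B, μ x ^ (1 / (1 + ρ)))) ∧
    ρ * (∑ x : X, -(ν' x * Real.log (ν' x)))
        - (∑ x : X, ν' x * Real.log (ν' x / μ x)) =
      (1 + ρ) * Real.log (∑ x ∈ B, μ x ^ (1 / (1 + ρ))) :=
  stmt6_general ρ hρ μ hμ0 B hμB ν' hν'
end

section
/- For any PMF P on a finite set X enumerated so that P(x_1) ≥ P(x_2) ≥ ... and any ρ > 0, M ≥ 1, one has ∑_{i=1}^{|X|} P(x_i)·min{i, M}^ρ ≤ (2+ρ)·∑_{j≥0} ∑_{i=0}^{M−1} P(x_{jM+i+1})·(i+1)^ρ, i.e., the saturated-moment sum is within factor (2+ρ) of the group-wise guessing moment (where indices beyond |X| are treated as probability 0). -/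
/-!
Split the indices into consecutive blocks of length `M`. On the first block the weight
`min (m + 1) M` is exactly `i + 1`, so that block contributes its own group-wise moment. On
every later block the weight is `M`, and since `p` is nonincreasing the block sum is at most
`M ^ (1 + ρ)` times the first probability of the block, which is bounded by every probability of
the preceding block. Comparing `∑_{i<M} (i+1)^ρ` with `∫₀^M x^ρ dx = M^(1+ρ)/(1+ρ)` then bounds
the block by `(1 + ρ)` times the group-wise moment of the preceding block.
-/

open Finset

theorem rpow_one_add_le_mul_sum_rpow {ρ : ℝ} (hρ : 0 ≤ ρ) (n : ℕ) :
    (n : ℝ) ^ (1 + ρ) ≤ (1 + ρ) * ∑ i ∈ range n, ((i : ℝ) + 1) ^ ρ := by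
  have hmono : MonotoneOn (fun x : ℝ => x ^ ρ) (Set.Icc 0 (0 + n)) := fun x hx y _ hxy =>
    Real.rpow_le_rpow hx.1 hxy hρ
  have h := hmono.integral_le_sum
  rw [zero_add, integral_rpow (by left; linarith), Real.zero_rpow (by positivity), sub_zero,
    div_le_iff₀ (by positivity)] at h
  simpa [add_comm, mul_comm] using h

theorem Finset.sum_range_mul_eq_sum_sum {β : Type*} [AddCommMonoid β] (f : ℕ → β) (J n : ℕ) :
    ∑ m ∈ range (J * n), f m = ∑ j ∈ range J, ∑ i ∈ range n, f (j * n + i) := by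
  induction J with
  | zero => simp
  | succ J ih => rw [Nat.succ_mul, sum_range_add, ih, sum_range_succ]

theorem sum_succ_block_mul_rpow_le {p : ℕ → ℝ} (hp0 : ∀ i, 0 ≤ p i) (hanti : Antitone p)
    {ρ : ℝ} (hρ : 0 ≤ ρ) (M j : ℕ) :
    ∑ i ∈ range M, p ((j + 1) * M + i) * (M : ℝ) ^ ρ ≤
      (1 + ρ) * ∑ i ∈ range M, p (j * M + i) * ((i : ℝ) + 1) ^ ρ := by
  calc ∑ i ∈ range M, p ((j + 1) * M + i) * (M : ℝ) ^ ρ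
      ≤ ∑ _i ∈ range M, p ((j + 1) * M) * (M : ℝ) ^ ρ := by
        gcongr with i
        exact hanti (Nat.le_add_right _ _)
    _ = p ((j + 1) * M) * (M : ℝ) ^ (1 + ρ) := by
        rw [sum_const, card_range, nsmul_eq_mul, Real.rpow_one_add' (by positivity) (by positivity)]
        ring
    _ ≤ p ((j + 1) * M) * ((1 + ρ) * ∑ i ∈ range M, ((i : ℝ) + 1) ^ ρ) := by
        gcongr
        · exact hp0 _
        · exact rpow_one_add_le_mul_sum_rpow hρ M
    _ = (1 + ρ) * ∑ i ∈ range M, p ((j + 1) * M) * ((i : ℝ) + 1) ^ ρ := by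
        rw [mul_left_comm, mul_sum]
    _ ≤ (1 + ρ) * ∑ i ∈ range M, p (j * M + i) * ((i : ℝ) + 1) ^ ρ := by
        gcongr with i hi
        exact hanti (by rw [mem_range] at hi; nlinarith)

theorem stmt12_general (p : ℕ → ℝ) (hp0 : ∀ i, 0 ≤ p i) (hanti : Antitone p)
    (N : ℕ) (hsupp : ∀ i, N ≤ i → p i = 0)
    (M : ℕ) (J : ℕ) (hJ : N ≤ J * M)
    (ρ : ℝ) (hρ : 0 < ρ) :
    ∑ m ∈ Finset.range N, p m * ((min (m + 1) M : ℕ) : ℝ) ^ ρ ≤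
      (2 + ρ) * ∑ j ∈ Finset.range J, ∑ i ∈ Finset.range M,
        p (j * M + i) * ((i : ℝ) + 1) ^ ρ := by
  rcases J with _ | K
  · obtain rfl : N = 0 := by simpa using hJ
    simp
  set S : ℕ → ℝ := fun j => ∑ i ∈ range M, p (j * M + i) * ((i : ℝ) + 1) ^ ρ
  have hS : ∀ j, 0 ≤ S j := fun j => sum_nonneg fun i _ => mul_nonneg (hp0 _) (by positivity)
  calc ∑ m ∈ range N, p m * ((min (m + 1) M : ℕ) : ℝ) ^ ρ
      = ∑ m ∈ range ((K + 1) * M), p m * ((min (m + 1) M : ℕ) : ℝ) ^ ρ :=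
        sum_subset (range_subset_range.2 hJ) fun m _ hm => by
          rw [hsupp m (by simpa using hm), zero_mul]
    _ = S 0 + ∑ j ∈ range K, ∑ i ∈ range M, p ((j + 1) * M + i) * (M : ℝ) ^ ρ := by
        rw [sum_range_mul_eq_sum_sum, sum_range_succ', add_comm]
        congr 1
        · refine sum_congr rfl fun i hi => ?_
          rw [zero_mul, zero_add, min_eq_left (mem_range.1 hi)]
          push_cast; rfl
        · refine sum_congr rfl fun j _ => sum_congr rfl fun i _ => ?_
          rw [min_eq_right (by nlinarith)]
    _ ≤ S 0 + (1 + ρ) * ∑ j ∈ range K, S j := by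
        rw [mul_sum]
        gcongr with j
        exact sum_succ_block_mul_rpow_le hp0 hanti hρ.le M j
    _ ≤ (2 + ρ) * ∑ j ∈ range (K + 1), S j := by
        have hprefix : ∑ j ∈ range K, S j ≤ ∑ j ∈ range (K + 1), S j :=
          sum_le_sum_of_subset_of_nonneg (range_subset_range.2 K.le_succ) fun j _ _ => hS j
        have hfirst : S 0 ≤ ∑ j ∈ range (K + 1), S j :=
          single_le_sum (fun j _ => hS j) (mem_range.2 K.succ_pos)
        linarith [mul_le_mul_of_nonneg_left hprefix (by linarith : (0 : ℝ) ≤ 1 + ρ)]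

/-- Saturated-moment vs. group-wise guessing moment: let `p i` (for `i : ℕ`,
`0`-based) be the probabilities of the messages enumerated in nonincreasing
order, with `p i = 0` for `i ≥ N` (indices beyond `|X|` are dummy messages of
probability `0`), and pad so that `N ≤ J·M`.  Then for any `ρ > 0` and `M ≥ 1`,
`∑_{m} p m · (min (m+1) M)^ρ ≤ (2+ρ) · ∑_{j<J} ∑_{i<M} p (jM+i) · (i+1)^ρ`. -/
theorem stmt12 (p : ℕ → ℝ) (hp0 : ∀ i, 0 ≤ p i) (hanti : Antitone p)
    (N : ℕ) (hN : 0 < N) (hsupp : ∀ i, N ≤ i → p i = 0)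
    (hsum : ∑ i ∈ Finset.range N, p i = 1)
    (M : ℕ) (hM : 1 ≤ M) (J : ℕ) (hJ : N ≤ J * M)
    (ρ : ℝ) (hρ : 0 < ρ) :
    ∑ m ∈ Finset.range N, p m * ((min (m + 1) M : ℕ) : ℝ) ^ ρ ≤
      (2 + ρ) * ∑ j ∈ Finset.range J, ∑ i ∈ Finset.range M,
        p (j * M + i) * ((i : ℝ) + 1) ^ ρ :=
  stmt12_general p hp0 hanti N hsupp M J hJ ρ hρ
end

section
/- Restricted divergence upper bound: for PMFs Q ≪ P on a finite set and B with Q(B) > 0, D(Q_B‖P) ≤ −ln Q(B) + D(Q‖P)/Q(B) + 1/Q(B), where Q_B is the conditional distribution of Q given B. -/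
/-!
Writing `q = Q(B)`, each term of `D(Q_B‖P)` equals `(Q x log (Q x / P x)) / q - (Q x / q) log q`,
so `D(Q_B‖P) = (∑_{x ∈ B} Q x log (Q x / P x)) / q - log q`. The partial divergence over `B` differs
from `D(Q‖P)` by the sum over `Bᶜ`, and `t log t ≥ t - 1` at `t = Q x / P x` bounds each of
those terms below by `Q x - P x`; hence the partial sum is at most `D(Q‖P) + P(Bᶜ) - Q(Bᶜ) ≤ D(Q‖P) + 1`.
-/

open Real Finset

namespace Real

variable {p q : ℝ}

lemma sub_le_mul_log_div (hp : 0 ≤ p) (hq : 0 ≤ q) (hpq : p = 0 → q = 0) :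
    q - p ≤ q * log (q / p) := by
  rcases hp.eq_or_lt with rfl | hp
  · simp [hpq rfl]
  have h := mul_le_mul_of_nonneg_left (self_sub_one_le_mul_log (div_nonneg hq hp.le)) hp.le
  rwa [mul_sub, mul_one, mul_div_cancel₀ _ hp.ne', ← mul_assoc, mul_div_cancel₀ _ hp.ne'] at h

lemma div_mul_log_div_div (c : ℝ) (hc : c ≠ 0) (hpq : p = 0 → q = 0) :
    q / c * log (q / c / p) = q * log (q / p) / c - q / c * log c := by
  by_cases hq : q = 0
  · simp [hq]
  have hp : p ≠ 0 := fun hp ↦ hq (hpq hp)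
  rw [div_right_comm, log_div (div_ne_zero hq hp) hc]
  ring

end Real

section PartialDivergence

variable {ι : Type*} (P Q : ι → ℝ)

lemma sum_div_mul_log_div_div (s : Finset ι) (hac : ∀ x, P x = 0 → Q x = 0)
    (hs : ∑ x ∈ s, Q x ≠ 0) :
    ∑ x ∈ s, Q x / (∑ y ∈ s, Q y) * log (Q x / (∑ y ∈ s, Q y) / P x) =
      (∑ x ∈ s, Q x * log (Q x / P x)) / (∑ x ∈ s, Q x) - log (∑ x ∈ s, Q x) := by
  rw [sum_congr rfl fun x _ ↦ div_mul_log_div_div _ hs (hac x), sum_sub_distrib, ← sum_div,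
    ← sum_mul, ← sum_div, div_self hs, one_mul]

variable {P Q}

lemma sum_mul_log_div_le_of_subset [DecidableEq ι] {s t : Finset ι} (hst : s ⊆ t)
    (hP0 : ∀ x, 0 ≤ P x) (hQ0 : ∀ x, 0 ≤ Q x) (hac : ∀ x, P x = 0 → Q x = 0) :
    ∑ x ∈ s, Q x * log (Q x / P x) ≤
      ∑ x ∈ t, Q x * log (Q x / P x) + ∑ x ∈ t \ s, (P x - Q x) := by
  have hrest : ∑ x ∈ t \ s, (Q x - P x) ≤ ∑ x ∈ t \ s, Q x * log (Q x / P x) :=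
    sum_le_sum fun x _ ↦ sub_le_mul_log_div (hP0 x) (hQ0 x) (hac x)
  rw [← sum_sdiff hst]
  simp only [sum_sub_distrib] at hrest ⊢
  linarith

end PartialDivergence

theorem stmt17_general {S : Type*} [Fintype S]
    (P Q : S → ℝ) (hP0 : ∀ x, 0 ≤ P x) (hP1 : ∑ x : S, P x = 1)
    (hQ0 : ∀ x, 0 ≤ Q x)
    (hac : ∀ x, P x = 0 → Q x = 0)
    (B : Finset S) (hQB : 0 < ∑ x ∈ B, Q x) :
    ∑ x ∈ B, (Q x / ∑ y ∈ B, Q y) * Real.log ((Q x / ∑ y ∈ B, Q y) / P x) ≤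
      - Real.log (∑ x ∈ B, Q x)
      + (∑ x : S, Q x * Real.log (Q x / P x)) / (∑ x ∈ B, Q x)
      + 1 / (∑ x ∈ B, Q x) := by
  classical
  have hpartial := sum_mul_log_div_le_of_subset (subset_univ B) hP0 hQ0 hac
  have hPc : ∑ x ∈ univ \ B, P x ≤ 1 :=
    hP1 ▸ sum_le_sum_of_subset_of_nonneg sdiff_subset fun x _ _ ↦ hP0 x
  have hQc : 0 ≤ ∑ x ∈ univ \ B, Q x := sum_nonneg fun x _ ↦ hQ0 x
  rw [sum_sub_distrib] at hpartial
  have hB : ∑ x ∈ B, Q x * log (Q x / P x) ≤ ∑ x, Q x * log (Q x / P x) + 1 := by linarith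
  have hBq := div_le_div_of_nonneg_right hB hQB.le
  rw [add_div] at hBq
  rw [sum_div_mul_log_div_div P Q B hac hQB.ne']
  linarith

/-- Restricted divergence upper bound: for PMFs `Q ≪ P` on a finite set and
`B` with `Q(B) > 0`,
`D(Q_B‖P) ≤ −ln Q(B) + D(Q‖P)/Q(B) + 1/Q(B)`,
where `Q_B` is the conditional distribution of `Q` given `B`. -/
theorem stmt17 {S : Type*} [Fintype S]
    (P Q : S → ℝ) (hP0 : ∀ x, 0 ≤ P x) (hP1 : ∑ x : S, P x = 1)
    (hQ0 : ∀ x, 0 ≤ Q x) (hQ1 : ∑ x : S, Q x = 1)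
    (hac : ∀ x, P x = 0 → Q x = 0)
    (B : Finset S) (hQB : 0 < ∑ x ∈ B, Q x) :
    ∑ x ∈ B, (Q x / ∑ y ∈ B, Q y) * Real.log ((Q x / ∑ y ∈ B, Q y) / P x) ≤
      - Real.log (∑ x ∈ B, Q x)
      + (∑ x : S, Q x * Real.log (Q x / P x)) / (∑ x ∈ B, Q x)
      + 1 / (∑ x ∈ B, Q x) :=
  stmt17_general P Q hP0 hP1 hQ0 hac B hQB
end

section
/- For an iid source with marginal P₁ on finite X and ρ > 0, R > 0, min over θ ∈ [0,ρ] of { (ρ−θ)R + sup_Q [θ H(Q) − D(Q‖P₁)] } = sup over PMFs Q on X of { ρ min{H(Q), R} − D(Q‖P₁) }, where the sup is over PMFs Q on X. -/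
/-!
Substituting `w_θ = P₁ ^ (1 + θ)⁻¹` turns the inner objective into
`θ H(Q) - D(Q‖P₁) = (1 + θ) ∑ Q log (w_θ / Q)`, so by Gibbs' inequality the inner supremum is
attained at the tilted distribution `Q_θ = w_θ / ∑ w_θ`. Weak duality
`ρ min(H(Q), R) ≤ (ρ - θ) R + θ H(Q)` bounds the right side by the left. Conversely, some
`θ ∈ [0, ρ]` satisfies complementary slackness for `Q_θ`: `θ = 0` if `H(P₁) ≥ R`, `θ = ρ` if
`H(Q_ρ) ≤ R`, and otherwise `H(Q_θ) = R` by the intermediate value theorem, `θ ↦ H(Q_θ)` being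
continuous; then `Q_θ` attains the left side in the right one.
-/

open Real Finset Set

lemma csInf_eq_csSup_of_forall_le_of_exists_le {α : Type*} [ConditionallyCompleteLattice α]
    {A B : Set α} (hBA : ∀ a ∈ A, ∀ b ∈ B, b ≤ a) (hex : ∃ a ∈ A, ∃ b ∈ B, a ≤ b) :
    sInf A = sSup B := by
  obtain ⟨a, ha, b, hb, hab⟩ := hex
  rw [IsLeast.csInf_eq ⟨ha, fun a' ha' => hab.trans (hBA a' ha' b hb)⟩,
    IsGreatest.csSup_eq ⟨hb, fun b' hb' => (hBA a ha b' hb').trans hab⟩]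
  exact le_antisymm hab (hBA a ha b hb)

lemma mul_min_le_sub_mul_add_mul {ρ θ h R : ℝ} (hθ : θ ∈ Icc 0 ρ) :
    ρ * min h R ≤ (ρ - θ) * R + θ * h := by
  nlinarith [min_le_left h R, min_le_right h R, hθ.1, hθ.2]

lemma exists_mem_Icc_sub_mul_add_mul_le_mul_min {h : ℝ → ℝ} {ρ : ℝ} (hρ : 0 ≤ ρ) (R : ℝ)
    (hh : ContinuousOn h (Icc 0 ρ)) :
    ∃ θ ∈ Icc 0 ρ, (ρ - θ) * R + θ * h θ ≤ ρ * min (h θ) R := by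
  rcases le_or_gt R (h 0) with h0 | h0
  · exact ⟨0, left_mem_Icc.2 hρ, by simp [min_eq_right h0]⟩
  rcases le_or_gt (h ρ) R with hρR | hρR
  · exact ⟨ρ, right_mem_Icc.2 hρ, by simp [min_eq_left hρR]⟩
  obtain ⟨θ, hθ, hθR⟩ := intermediate_value_Icc hρ hh ⟨h0.le, hρR.le⟩
  exact ⟨θ, hθ, by rw [hθR, min_self]; linarith⟩

lemma mul_log_div_le_sub {q a : ℝ} (hq : 0 ≤ q) (ha : 0 ≤ a) (haq : a = 0 → q = 0) :
    q * log (a / q) ≤ a - q := by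
  rcases hq.eq_or_lt with rfl | hq
  · simpa using ha
  have ha : 0 < a := ha.lt_of_ne fun h => hq.ne' (haq h.symm)
  calc q * log (a / q) ≤ q * (a / q - 1) := by gcongr; exact log_le_sub_one_of_pos (by positivity)
    _ = a - q := by field_simp

section Gibbs

variable {X : Type*} [Fintype X] {w : X → ℝ}

lemma sum_mul_log_div_le_log_sum (hw : ∀ x, 0 ≤ w x) {Q : X → ℝ} (hQ0 : ∀ x, 0 ≤ Q x)
    (hQ1 : ∑ x, Q x = 1) (hQw : ∀ x, w x = 0 → Q x = 0) :
    ∑ x, Q x * log (w x / Q x) ≤ log (∑ x, w x) := by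
  set Z := ∑ x, w x
  have hZ : 0 < Z := by
    obtain ⟨x, hx⟩ : ∃ x, Q x ≠ 0 := by
      by_contra! h
      simp [h] at hQ1
    exact sum_pos' (fun x _ => hw x) ⟨x, mem_univ x, (hw x).lt_of_ne fun h => hx (hQw x h.symm)⟩
  have hterm : ∀ x, Q x * log (w x / Q x) - Q x * log Z ≤ w x / Z - Q x := fun x => by
    rcases (hQ0 x).eq_or_lt with hq | hq
    · rw [← hq]
      simpa using div_nonneg (hw x) hZ.le
    have hwx : 0 < w x := (hw x).lt_of_ne fun h => hq.ne' (hQw x h.symm)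
    rw [← mul_sub, ← log_div (by positivity) hZ.ne', div_right_comm]
    exact mul_log_div_le_sub hq.le (by positivity) fun h => absurd h (by positivity)
  have hsum := sum_le_sum fun x (_ : x ∈ Finset.univ) => hterm x
  rw [sum_sub_distrib, sum_sub_distrib, ← sum_mul, ← sum_div, hQ1, div_self hZ.ne'] at hsum
  linarith

lemma sum_div_sum_mul_log_div_div_sum (hw : ∀ x, 0 ≤ w x) :
    ∑ x, w x / (∑ y, w y) * log (w x / (w x / ∑ y, w y)) = log (∑ x, w x) := by
  set Z := ∑ x, w x
  rcases (sum_nonneg fun x (_ : x ∈ Finset.univ) => hw x).eq_or_lt with hZ | hZ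
  · simp [Z, ← hZ]
  calc ∑ x, w x / Z * log (w x / (w x / Z)) = ∑ x, w x / Z * log Z := by
        refine sum_congr rfl fun x _ => ?_
        rcases (hw x).eq_or_lt with hx | hx
        · simp [← hx]
        · rw [div_div_cancel₀ hx.ne']
    _ = log Z := by rw [← sum_mul, ← sum_div, div_self hZ.ne', one_mul]

end Gibbs

lemma mul_neg_mul_log_sub_mul_log_div {θ p q : ℝ} (hθ : 1 + θ ≠ 0) (hp : 0 ≤ p) (hq : 0 ≤ q)
    (hpq : p = 0 → q = 0) :
    θ * -(q * log q) - q * log (q / p) = (1 + θ) * (q * log (p ^ (1 + θ)⁻¹ / q)) := by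
  rcases hq.eq_or_lt with rfl | hq
  · simp
  have hp : 0 < p := hp.lt_of_ne fun h => hq.ne' (hpq h.symm)
  rw [log_div hq.ne' hp.ne', log_div (by positivity) hq.ne', log_rpow hp]
  field_simp
  ring

lemma continuousOn_rpow_inv_one_add (p : ℝ) :
    ContinuousOn (fun θ : ℝ => p ^ (1 + θ)⁻¹) (Ioi (-1)) := fun θ hθ => by
  have h : 1 + θ ≠ 0 := by linarith [show -1 < θ from hθ]
  exact ((continuousAt_const_rpow' (inv_ne_zero h)).comp (f := fun θ : ℝ => (1 + θ)⁻¹)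
    ((continuousAt_const.add continuousAt_id).inv₀ h)).continuousWithinAt

section Tilted

variable {X : Type*} [Fintype X] {P : X → ℝ}

noncomputable def tilted (P : X → ℝ) (θ : ℝ) (x : X) : ℝ :=
  P x ^ (1 + θ)⁻¹ / ∑ y, P y ^ (1 + θ)⁻¹

lemma tilted_eq_zero {θ : ℝ} (hθ : 1 + θ ≠ 0) {x : X} (hx : P x = 0) : tilted P θ x = 0 := by
  rw [tilted, hx, zero_rpow (inv_ne_zero hθ), zero_div]

lemma mul_entropy_sub_klDiv_eq (hP0 : ∀ x, 0 ≤ P x) {θ : ℝ} (hθ : 1 + θ ≠ 0) {Q : X → ℝ}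
    (hQ0 : ∀ x, 0 ≤ Q x) (hQP : ∀ x, P x = 0 → Q x = 0) :
    θ * (∑ x, -(Q x * log (Q x))) - ∑ x, Q x * log (Q x / P x) =
      (1 + θ) * ∑ x, Q x * log (P x ^ (1 + θ)⁻¹ / Q x) := by
  rw [mul_sum, mul_sum, ← sum_sub_distrib]
  exact sum_congr rfl fun x _ => mul_neg_mul_log_sub_mul_log_div hθ (hP0 x) (hQ0 x) (hQP x)

variable (hP0 : ∀ x, 0 ≤ P x) (hP1 : ∑ x, P x = 1)
include hP0 hP1

lemma sum_rpow_pos_s19 (s : ℝ) : 0 < ∑ x, P x ^ s := by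
  obtain ⟨x, hx⟩ : ∃ x, P x ≠ 0 := by
    by_contra! h
    simp [h] at hP1
  exact sum_pos' (fun y _ => rpow_nonneg (hP0 y) s)
    ⟨x, mem_univ x, rpow_pos_of_pos ((hP0 x).lt_of_ne' hx) s⟩

lemma tilted_nonneg (θ : ℝ) (x : X) : 0 ≤ tilted P θ x :=
  div_nonneg (rpow_nonneg (hP0 x) _) (sum_rpow_pos_s19 hP0 hP1 _).le

lemma sum_tilted (θ : ℝ) : ∑ x, tilted P θ x = 1 := by
  simp only [tilted]
  rw [← sum_div, div_self (sum_rpow_pos_s19 hP0 hP1 _).ne']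

lemma isGreatest_tilted {θ : ℝ} (hθ : 0 < 1 + θ) :
    IsGreatest {u : ℝ | ∃ Q : X → ℝ, (∀ x, 0 ≤ Q x) ∧ (∑ x, Q x = 1) ∧
        (∀ x, P x = 0 → Q x = 0) ∧
        u = θ * (∑ x, -(Q x * log (Q x))) - ∑ x, Q x * log (Q x / P x)}
      (θ * (∑ x, -(tilted P θ x * log (tilted P θ x)))
        - ∑ x, tilted P θ x * log (tilted P θ x / P x)) := by
  have hw : ∀ x, 0 ≤ P x ^ (1 + θ)⁻¹ := fun x => rpow_nonneg (hP0 x) _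
  have htilted := fun x => tilted_eq_zero (P := P) hθ.ne' (x := x)
  refine ⟨⟨tilted P θ, tilted_nonneg hP0 hP1 θ, sum_tilted hP0 hP1 θ, htilted, rfl⟩, ?_⟩
  rintro _ ⟨Q, hQ0, hQ1, hQP, rfl⟩
  rw [mul_entropy_sub_klDiv_eq hP0 hθ.ne' hQ0 hQP,
    mul_entropy_sub_klDiv_eq hP0 hθ.ne' (tilted_nonneg hP0 hP1 θ) htilted]
  refine mul_le_mul_of_nonneg_left ?_ hθ.le
  refine (sum_mul_log_div_le_log_sum hw hQ0 hQ1 fun x hx => hQP x ?_).trans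
    (sum_div_sum_mul_log_div_div_sum hw).ge
  exact (rpow_eq_zero (hP0 x) (inv_ne_zero hθ.ne')).1 hx

lemma continuousOn_entropy_tilted :
    ContinuousOn (fun θ => ∑ x, -(tilted P θ x * log (tilted P θ x))) (Ioi (-1)) :=
  continuousOn_finsetSum _ fun _ _ => continuous_mul_log.neg.comp_continuousOn
    ((continuousOn_rpow_inv_one_add _).div
      (continuousOn_finsetSum _ fun _ _ => continuousOn_rpow_inv_one_add _)
      fun _ _ => (sum_rpow_pos_s19 hP0 hP1 _).ne')

end Tilted

theorem stmt19_general {X : Type*} [Fintype X]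
    (P₁ : X → ℝ) (hP0 : ∀ x, 0 ≤ P₁ x) (hP1 : ∑ x : X, P₁ x = 1)
    (ρ R : ℝ) (hρ : 0 < ρ) :
    sInf {v : ℝ | ∃ θ ∈ Set.Icc (0 : ℝ) ρ,
        v = (ρ - θ) * R +
          sSup {u : ℝ | ∃ Q : X → ℝ, (∀ x, 0 ≤ Q x) ∧ (∑ x : X, Q x = 1) ∧
            (∀ x, P₁ x = 0 → Q x = 0) ∧
            u = θ * (∑ x : X, -(Q x * Real.log (Q x)))
              - ∑ x : X, Q x * Real.log (Q x / P₁ x)}} =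
      sSup {w : ℝ | ∃ Q : X → ℝ, (∀ x, 0 ≤ Q x) ∧ (∑ x : X, Q x = 1) ∧
        (∀ x, P₁ x = 0 → Q x = 0) ∧
        w = ρ * min (∑ x : X, -(Q x * Real.log (Q x))) R
          - ∑ x : X, Q x * Real.log (Q x / P₁ x)} := by
  obtain ⟨θ, hθ, hslack⟩ := exists_mem_Icc_sub_mul_add_mul_le_mul_min hρ.le R
    ((continuousOn_entropy_tilted hP0 hP1).mono fun θ hθ => show -1 < θ by linarith [hθ.1])
  apply csInf_eq_csSup_of_forall_le_of_exists_le
  · rintro _ ⟨θ', hθ', rfl⟩ _ ⟨Q, hQ0, hQ1, hQP, rfl⟩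
    have hmax := isGreatest_tilted hP0 hP1 (θ := θ') (by linarith [hθ'.1])
    rw [hmax.csSup_eq]
    have hle := hmax.2 ⟨Q, hQ0, hQ1, hQP, rfl⟩
    have := mul_min_le_sub_mul_add_mul (h := ∑ x, -(Q x * log (Q x))) (R := R) hθ'
    linarith
  · have hθ1 : 0 < 1 + θ := by linarith [hθ.1]
    have hmax := isGreatest_tilted hP0 hP1 hθ1
    refine ⟨_, ⟨θ, hθ, rfl⟩, _, ⟨tilted P₁ θ, tilted_nonneg hP0 hP1 θ, sum_tilted hP0 hP1 θ,
      fun _ => tilted_eq_zero hθ1.ne', rfl⟩, ?_⟩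
    rw [hmax.csSup_eq]
    linarith

/-- For an iid source with marginal `P₁` on finite `X` and `ρ > 0`, `R > 0`,
`min_{θ∈[0,ρ]} { (ρ−θ)R + sup_Q [θ H(Q) − D(Q‖P₁)] }
  = sup_Q { ρ min{H(Q), R} − D(Q‖P₁) }`,
the suprema being over PMFs `Q` on `X` (those not absolutely continuous
w.r.t. `P₁` have `D(Q‖P₁) = +∞` and do not contribute). -/
theorem stmt19 {X : Type*} [Fintype X] [Nonempty X]
    (P₁ : X → ℝ) (hP0 : ∀ x, 0 ≤ P₁ x) (hP1 : ∑ x : X, P₁ x = 1)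
    (ρ R : ℝ) (hρ : 0 < ρ) (hR : 0 < R) :
    sInf {v : ℝ | ∃ θ ∈ Set.Icc (0 : ℝ) ρ,
        v = (ρ - θ) * R +
          sSup {u : ℝ | ∃ Q : X → ℝ, (∀ x, 0 ≤ Q x) ∧ (∑ x : X, Q x = 1) ∧
            (∀ x, P₁ x = 0 → Q x = 0) ∧
            u = θ * (∑ x : X, -(Q x * Real.log (Q x)))
              - ∑ x : X, Q x * Real.log (Q x / P₁ x)}} =
      sSup {w : ℝ | ∃ Q : X → ℝ, (∀ x, 0 ≤ Q x) ∧ (∑ x : X, Q x = 1) ∧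
        (∀ x, P₁ x = 0 → Q x = 0) ∧
        w = ρ * min (∑ x : X, -(Q x * Real.log (Q x))) R
          - ∑ x : X, Q x * Real.log (Q x / P₁ x)} :=
  stmt19_general P₁ hP0 hP1 ρ R hρ
end
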